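/- A finite digraph A has tree duality if and only if there exists a homomorphism from U(A) to A. -/

import Mathlib

def Hom {α β : Type*} (E : α → α → Prop) (F : β → β → Prop) (f : α → β) : Prop :=
  ∀ u v, E u v → F (f u) (f v)

/-- The digraph `U(A)` on nonempty subsets of `A`. -/
def URel {A : Type*} (E : A → A → Prop) :
    {X : Set A // X.Nonempty} → {X : Set A // X.Nonempty} → Prop :=
  fun X Y => (∀ x ∈ X.1, ∃ y ∈ Y.1, E x y) ∧ (∀ y ∈ Y.1, ∃ x ∈ X.1, E x y)

/-- A digraph is an oriented tree when its underlying undirected graph is a tree. -/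
def IsOrientedTree {T : Type*} (G : T → T → Prop) : Prop :=
  (SimpleGraph.fromRel G).IsTree

/-- `(A, E)` has tree duality. -/
def TreeDuality (A : Type) (E : A → A → Prop) : Prop :=
  ∀ (B : Type) (F : B → B → Prop), (¬ ∃ f : B → A, Hom F E f) →
    ∃ (T : Type) (G : T → T → Prop), IsOrientedTree G ∧
      (∃ g : T → B, Hom G F g) ∧ ¬ ∃ h : T → A, Hom G E h

/-!
If `U(A) ↛ A`, tree duality gives an oriented tree `T` with `T → U(A)` and `T ↛ A`. But a
homomorphism from a tree to `U(A)` descends to `A`: walk outward from a root, at each vertex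
choosing an element of its set that is adjacent to the one chosen at its parent. This needs `T`
to have no loops or digons, which is inherited from `U(A)` unless `U(A)` has a loop; in that
case tree duality applied to a transitive tournament longer than `|A|` forces a loop in `A`.

Conversely, given `φ : U(A) → A` and `B ↛ A`, run arc consistency: `S_{k+1}(b)` keeps the
`a ∈ A` which have, along every arc at `b`, a partner in the corresponding `S_k`. The limits
`⋂ₖ S_k(b)` are arc-consistent, so if they were all nonempty, `b ↦ φ(⋂ₖ S_k(b))` would be a
homomorphism `B → A`. Hence some `S_k(b₀)` is empty, and the depth-`k` unfolding of `B` at `b₀`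
is an oriented tree mapping to `B` but not to `A`.
-/

open SimpleGraph Set

namespace SimpleGraph

variable {V : Type*} {G : SimpleGraph V}

theorem IsAcyclic.eq_concat_or_eq_concat (hG : G.IsAcyclic) {u v w : V} {p : G.Walk u v}
    {q : G.Walk u w} (hp : p.IsPath) (hq : q.IsPath) (hadj : G.Adj v w) :
    q = p.concat hadj ∨ p = q.concat hadj.symm := by
  by_cases hv : v ∈ q.support
  · exact .inl (hG.path_concat hp hq hadj hv)
  · exact .inr (hG.path_concat hq hp hadj.symm
      (hG.mem_support_of_ne_mem_support_of_adj_of_isPath hp hq hadj hv))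

theorem isTree_of_height (r : V) (h : V → ℕ)
    (exists_lower : ∀ v, v ≠ r → ∃ w, G.Adj v w ∧ h w < h v)
    (lower_unique : ∀ v w w', G.Adj v w → G.Adj v w' → h w ≤ h v → h w' ≤ h v → w = w') :
    G.IsTree := by
  classical
  have reach (v : V) : G.Reachable v r := by
    induction hv : h v using Nat.strong_induction_on generalizing v with
    | _ n ih =>
      by_cases hvr : v = r
      · exact hvr ▸ Reachable.refl v
      obtain ⟨w, hvw, hwv⟩ := exists_lower v hvr
      exact hvw.reachable.trans (ih _ (hv ▸ hwv) w rfl)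
  have : Nonempty V := ⟨r⟩
  refine ⟨⟨fun v w => (reach v).trans (reach w).symm⟩, fun v c hc => ?_⟩
  -- a vertex of maximal height on the cycle has two distinct cycle neighbours, neither higher
  obtain ⟨u, hu, hmax⟩ := c.support.toFinset.exists_max_image h ⟨v, by simp⟩
  obtain ⟨w, w', hne, hww'⟩ := Set.ncard_eq_two.mp
    (hc.ncard_neighborSet_toSubgraph_eq_two (List.mem_toFinset.mp hu))
  have lower (x : V) (hx : c.toSubgraph.Adj u x) : G.Adj u x ∧ h x ≤ h u :=
    ⟨hx.adj_sub, hmax x (List.mem_toFinset.mpr ((c.mem_verts_toSubgraph).mp hx.snd_mem))⟩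
  have hw := lower w (show w ∈ c.toSubgraph.neighborSet u by simp [hww'])
  have hw' := lower w' (show w' ∈ c.toSubgraph.neighborSet u by simp [hww'])
  exact hne (lower_unique u w w' hw.1 hw'.1 hw.2 hw'.2)

end SimpleGraph

section LiftFromUniversal

variable {T A : Type*} {G : T → T → Prop} {E : A → A → Prop}
  {g : T → {X : Set A // X.Nonempty}}

theorem exists_step_of_hom_uRel (hg : Hom G (URel E) g) (hasymm : ∀ t t', G t t' → ¬ G t' t)
    {x v : T} (hxv : (fromRel G).Adj x v) {a : A} (ha : a ∈ (g x).1) :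
    ∃ a' ∈ (g v).1, (G x v → E a a') ∧ (G v x → E a' a) := by
  rcases ((fromRel_adj G x v).mp hxv).2 with hG | hG
  · obtain ⟨a', ha', hE⟩ := (hg x v hG).1 a ha
    exact ⟨a', ha', fun _ => hE, fun hG' => absurd hG' (hasymm x v hG)⟩
  · obtain ⟨a', ha', hE⟩ := (hg v x hG).2 a ha
    exact ⟨a', ha', fun hG' => absurd hG (hasymm x v hG'), fun _ => hE⟩

noncomputable def liftStep (hg : Hom G (URel E) g) (hasymm : ∀ t t', G t t' → ¬ G t' t)
    {x v : T} (hxv : (fromRel G).Adj x v) (a : (g x).1) : (g v).1 :=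
  ⟨_, (exists_step_of_hom_uRel hg hasymm hxv a.2).choose_spec.1⟩

theorem liftStep_spec (hg : Hom G (URel E) g) (hasymm : ∀ t t', G t t' → ¬ G t' t)
    {x v : T} (hxv : (fromRel G).Adj x v) (a : (g x).1) :
    (G x v → E a (liftStep hg hasymm hxv a)) ∧ (G v x → E (liftStep hg hasymm hxv a) a) :=
  (exists_step_of_hom_uRel hg hasymm hxv a.2).choose_spec.2

noncomputable def liftWalk (hg : Hom G (URel E) g) (hasymm : ∀ t t', G t t' → ¬ G t' t) :
    ∀ {x u : T}, (fromRel G).Walk x u → (g x).1 → (g u).1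
  | _, _, .nil, a => a
  | _, _, .cons hxv p, a => liftWalk hg hasymm p (liftStep hg hasymm hxv a)

theorem liftWalk_concat (hg : Hom G (URel E) g) (hasymm : ∀ t t', G t t' → ¬ G t' t)
    {x u v : T} (p : (fromRel G).Walk x u) (huv : (fromRel G).Adj u v) (a : (g x).1) :
    liftWalk hg hasymm (p.concat huv) a = liftStep hg hasymm huv (liftWalk hg hasymm p a) := by
  induction p with
  | nil => rfl
  | cons _ p ih => exact ih _ _

theorem IsOrientedTree.exists_hom_of_hom_uRel (hT : IsOrientedTree G)
    (hasymm : ∀ t t', G t t' → ¬ G t' t) (hg : Hom G (URel E) g) : ∃ h : T → A, Hom G E h := by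
  obtain ⟨r⟩ := hT.connected.nonempty
  choose P hP using fun t => (hT.existsUnique_path r t).exists
  let lift (t : T) : (g t).1 := liftWalk hg hasymm (P t) ⟨_, (g r).2.some_mem⟩
  refine ⟨fun t => lift t, fun t t' hG => ?_⟩
  have hadj : (fromRel G).Adj t t' :=
    (fromRel_adj G t t').mpr ⟨by rintro rfl; exact hasymm t t hG hG, .inl hG⟩
  rcases hT.isAcyclic.eq_concat_or_eq_concat (hP t) (hP t') hadj with h | h
  · simp only [lift, h, liftWalk_concat]
    exact (liftStep_spec hg hasymm hadj _).1 hG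
  · simp only [lift, h, liftWalk_concat]
    exact (liftStep_spec hg hasymm hadj.symm _).2 hG

end LiftFromUniversal

theorem uRel_union_self {A : Type*} {E : A → A → Prop} {X Y : {X : Set A // X.Nonempty}}
    (hXY : URel E X Y) (hYX : URel E Y X) :
    URel E ⟨X.1 ∪ Y.1, X.2.mono subset_union_left⟩ ⟨X.1 ∪ Y.1, X.2.mono subset_union_left⟩ := by
  constructor
  · rintro x (hx | hx)
    · obtain ⟨y, hy, hxy⟩ := hXY.1 x hx
      exact ⟨y, .inr hy, hxy⟩
    · obtain ⟨y, hy, hxy⟩ := hYX.1 x hx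
      exact ⟨y, .inl hy, hxy⟩
  · rintro y (hy | hy)
    · obtain ⟨x, hx, hxy⟩ := hYX.2 y hy
      exact ⟨x, .inr hx, hxy⟩
    · obtain ⟨x, hx, hxy⟩ := hXY.2 y hy
      exact ⟨x, .inl hx, hxy⟩

theorem exists_loop_of_hom_lt {ι A : Type*} [LinearOrder ι] [Fintype ι] [Fintype A]
    {E : A → A → Prop} (hcard : Fintype.card A < Fintype.card ι) {f : ι → A}
    (hf : Hom (· < ·) E f) : ∃ a, E a a := by
  obtain ⟨i, j, hij, hfij⟩ := Fintype.exists_ne_map_eq_of_card_lt f hcard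
  rcases hij.lt_or_gt with hlt | hlt
  · exact ⟨f j, hfij ▸ hf i j hlt⟩
  · exact ⟨f i, hfij ▸ hf j i hlt⟩

theorem TreeDuality.exists_hom_of_hom_uRel {A : Type} {E : A → A → Prop} (hA : TreeDuality A E)
    {B : Type} {F : B → B → Prop} (hasymm : ∀ b b', F b b' → ¬ F b' b)
    (hBU : ∃ u : B → {X : Set A // X.Nonempty}, Hom F (URel E) u) : ∃ f : B → A, Hom F E f := by
  by_contra hB
  obtain ⟨T, G, hT, ⟨g, hg⟩, hTA⟩ := hA B F hB
  obtain ⟨u, hu⟩ := hBU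
  exact hTA (hT.exists_hom_of_hom_uRel (fun t t' h h' => hasymm _ _ (hg _ _ h) (hg _ _ h'))
    fun t t' h => hu _ _ (hg t t' h))

theorem exists_hom_uRel_of_treeDuality {A : Type} [Fintype A] {E : A → A → Prop}
    (hA : TreeDuality A E) : ∃ φ : {X : Set A // X.Nonempty} → A, Hom (URel E) E φ := by
  by_cases hloop : ∃ X, URel E X X
  · obtain ⟨X, hX⟩ := hloop
    obtain ⟨f, hf⟩ := hA.exists_hom_of_hom_uRel (B := Fin (Fintype.card A + 1)) (F := (· < ·))
      (fun _ _ => lt_asymm) ⟨fun _ => X, fun _ _ _ => hX⟩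
    obtain ⟨a, ha⟩ := exists_loop_of_hom_lt (by simp) hf
    exact ⟨fun _ => a, fun _ _ _ => ha⟩
  · exact hA.exists_hom_of_hom_uRel (fun X Y hXY hYX => hloop ⟨_, uRel_union_self hXY hYX⟩)
      ⟨id, fun _ _ => id⟩

theorem Set.nonempty_iInter_of_antitone {α : Type*} [Finite α] {s : ℕ → Set α}
    (hs : Antitone s) (hne : ∀ n, (s n).Nonempty) : (⋂ n, s n).Nonempty := by
  obtain ⟨n, hn⟩ := WellFoundedLT.antitone_chain_condition hs
  obtain ⟨a, ha⟩ := hne n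
  refine ⟨a, mem_iInter.mpr fun m => ?_⟩
  rcases le_total n m with h | h
  · exact hn m h ▸ ha
  · exact hs h ha

theorem Set.exists_mem_iInter_of_antitone {α : Type*} [Finite α] {s : ℕ → Set α}
    (hs : Antitone s) {p : α → Prop} (h : ∀ n, ∃ a ∈ s n, p a) : ∃ a ∈ ⋂ n, s n, p a := by
  obtain ⟨a, ha⟩ := nonempty_iInter_of_antitone (s := fun n => s n ∩ {a | p a})
    (fun _ _ hmn => inter_subset_inter_left _ (hs hmn)) h
  exact ⟨a, mem_iInter.mpr fun n => (mem_iInter.mp ha n).1, (mem_iInter.mp ha 0).2⟩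

section ArcConsistency

variable {A B : Type*} (E : A → A → Prop) (F : B → B → Prop)

def consistentSet : ℕ → B → Set A
  | 0, _ => univ
  | k + 1, b => {a | (∀ b', F b b' → ∃ a' ∈ consistentSet k b', E a a') ∧
      (∀ b', F b' b → ∃ a' ∈ consistentSet k b', E a' a)}

variable {E F}

theorem consistentSet_succ_subset :
    ∀ k (b : B), consistentSet E F (k + 1) b ⊆ consistentSet E F k b
  | 0, _ => subset_univ _
  | k + 1, _ => fun _ ⟨hout, hin⟩ =>
    ⟨fun b' hb' => let ⟨a', ha', hE⟩ := hout b' hb'; ⟨a', consistentSet_succ_subset k b' ha', hE⟩,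
     fun b' hb' => let ⟨a', ha', hE⟩ := hin b' hb'; ⟨a', consistentSet_succ_subset k b' ha', hE⟩⟩

theorem antitone_consistentSet (b : B) : Antitone (consistentSet E F · b) :=
  antitone_nat_of_succ_le fun k => consistentSet_succ_subset k b

theorem uRel_iInter_consistentSet [Finite A] {b b' : B} (hF : F b b')
    (hb : (⋂ k, consistentSet E F k b).Nonempty) (hb' : (⋂ k, consistentSet E F k b').Nonempty) :
    URel E ⟨_, hb⟩ ⟨_, hb'⟩ := by
  refine ⟨fun a ha => ?_, fun a ha => ?_⟩
  · exact exists_mem_iInter_of_antitone (antitone_consistentSet b') fun k =>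
      (mem_iInter.mp ha (k + 1)).1 b' hF
  · exact exists_mem_iInter_of_antitone (antitone_consistentSet b) fun k =>
      (mem_iInter.mp ha (k + 1)).2 b hF

end ArcConsistency

section PrefixTree

variable {β : Type*}

/-- Lists grow at the head; the flag of the new head says whether the arc points to it. -/
def TreeArc (x y : List (Bool × β)) : Prop :=
  (∃ b, y = (true, b) :: x) ∨ ∃ b, x = (false, b) :: y

theorem fromRel_treeArc_adj {S : Set (List (Bool × β))} {x y : S} :
    (fromRel fun x y : S => TreeArc x.1 y.1).Adj x y ↔
      (∃ c, y.1 = c :: x.1) ∨ ∃ c, x.1 = c :: y.1 := by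
  rw [fromRel_adj]
  constructor
  · rintro ⟨-, (⟨b, h⟩ | ⟨b, h⟩) | (⟨b, h⟩ | ⟨b, h⟩)⟩
    exacts [.inl ⟨_, h⟩, .inr ⟨_, h⟩, .inr ⟨_, h⟩, .inl ⟨_, h⟩]
  · rintro (⟨⟨_ | _, b⟩, h⟩ | ⟨⟨_ | _, b⟩, h⟩) <;>
      refine ⟨fun hxy => List.cons_ne_self _ _ (hxy ▸ h).symm, ?_⟩ <;> simp [TreeArc, h]

theorem isOrientedTree_treeArc {S : Set (List (Bool × β))} (hnil : [] ∈ S)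
    (htail : ∀ l ∈ S, l.tail ∈ S) : IsOrientedTree fun x y : S => TreeArc x.1 y.1 := by
  have parent {x y : S} (hxy : (fromRel fun x y : S => TreeArc x.1 y.1).Adj x y)
      (hlen : y.1.length ≤ x.1.length) : y.1 = x.1.tail := by
    rcases fromRel_treeArc_adj.mp hxy with ⟨c, h⟩ | ⟨c, h⟩
    · simp [h] at hlen
    · simp [h]
  refine isTree_of_height ⟨[], hnil⟩ (fun x => x.1.length) (fun x hx => ?_)
    fun x y y' hy hy' hlen hlen' => Subtype.ext ((parent hy hlen).trans (parent hy' hlen').symm)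
  obtain ⟨c, l, hl⟩ := List.exists_cons_of_ne_nil fun h => hx (Subtype.ext h)
  have hlS : l ∈ S := by simpa [hl] using htail x.1 x.2
  exact ⟨⟨l, hlS⟩, fromRel_treeArc_adj.mpr (.inr ⟨c, hl⟩), by simp [hl]⟩

end PrefixTree

section Unfolding

variable {A B : Type} {E : A → A → Prop} {F : B → B → Prop}

def endpoint (b₀ : B) : List (Bool × B) → B
  | [] => b₀
  | (_, b) :: _ => b

/-- A walk in `B` from `b₀`, most recent step first, each step flagged `true` when it follows
an arc forwards and `false` when it follows one backwards. -/
def IsWalkFrom (F : B → B → Prop) (b₀ : B) : List (Bool × B) → Prop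
  | [] => True
  | (true, b) :: l => IsWalkFrom F b₀ l ∧ F (endpoint b₀ l) b
  | (false, b) :: l => IsWalkFrom F b₀ l ∧ F b (endpoint b₀ l)

def unfolding (F : B → B → Prop) (b₀ : B) (k : ℕ) : Set (List (Bool × B)) :=
  {l | l.length ≤ k ∧ IsWalkFrom F b₀ l}

theorem isOrientedTree_unfolding (b₀ : B) (k : ℕ) :
    IsOrientedTree fun x y : unfolding F b₀ k => TreeArc x.1 y.1 := by
  refine isOrientedTree_treeArc ⟨Nat.zero_le k, trivial⟩ ?_
  rintro l ⟨hlen, hwalk⟩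
  refine ⟨by rw [List.length_tail]; omega, ?_⟩
  rcases l with _ | ⟨⟨_ | _, b⟩, l⟩
  exacts [trivial, hwalk.1, hwalk.1]

theorem hom_endpoint_unfolding (b₀ : B) (k : ℕ) :
    Hom (fun x y : unfolding F b₀ k => TreeArc x.1 y.1) F fun x => endpoint b₀ x.1 := by
  rintro ⟨x, hx⟩ ⟨y, hy⟩ (⟨b, rfl⟩ | ⟨b, rfl⟩)
  · exact hy.2.2
  · exact hx.2.2

theorem mem_consistentSet_of_hom_unfolding {b₀ : B} {k : ℕ} {h : unfolding F b₀ k → A}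
    (hh : Hom (fun x y : unfolding F b₀ k => TreeArc x.1 y.1) E h) (n : ℕ)
    (x : unfolding F b₀ k) (hx : x.1.length + n ≤ k) :
    h x ∈ consistentSet E F n (endpoint b₀ x.1) := by
  induction n generalizing x with
  | zero => trivial
  | succ n ih =>
    obtain ⟨l, _, hwalk⟩ := x
    change l.length + (n + 1) ≤ k at hx
    refine ⟨fun b hb => ?_, fun b hb => ?_⟩
    · let child : unfolding F b₀ k := ⟨(true, b) :: l, by simp only [List.length_cons]; omega,
        hwalk, hb⟩
      exact ⟨h child, ih child (by simp only [child, List.length_cons]; omega),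
        hh _ child (.inl ⟨b, rfl⟩)⟩
    · let child : unfolding F b₀ k := ⟨(false, b) :: l, by simp only [List.length_cons]; omega,
        hwalk, hb⟩
      exact ⟨h child, ih child (by simp only [child, List.length_cons]; omega),
        hh child _ (.inr ⟨b, rfl⟩)⟩

end Unfolding

theorem treeDuality_of_hom_uRel {A : Type} [Finite A] {E : A → A → Prop}
    {φ : {X : Set A // X.Nonempty} → A} (hφ : Hom (URel E) E φ) : TreeDuality A E := by
  intro B F hB
  by_cases hne : ∀ b, (⋂ k, consistentSet E F k b).Nonempty
  · exact absurd
      ⟨fun b => φ ⟨_, hne b⟩, fun b b' hF => hφ _ _ (uRel_iInter_consistentSet hF _ _)⟩ hB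
  obtain ⟨b₀, hb₀⟩ := not_forall.mp hne
  obtain ⟨k, hk⟩ : ∃ k, ¬ (consistentSet E F k b₀).Nonempty := by
    by_contra! h
    exact hb₀ (nonempty_iInter_of_antitone (antitone_consistentSet b₀) h)
  refine ⟨unfolding F b₀ k, _, isOrientedTree_unfolding b₀ k,
    ⟨_, hom_endpoint_unfolding b₀ k⟩, fun ⟨h, hh⟩ => hk ?_⟩
  exact ⟨_, mem_consistentSet_of_hom_unfolding hh k ⟨[], Nat.zero_le k, trivial⟩
    (Nat.zero_add k).le⟩

/-- A finite digraph has tree duality iff there is a homomorphism from `U(A)` to `A`. -/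
theorem stmt16 (A : Type) [Fintype A] (E : A → A → Prop) :
    TreeDuality A E ↔ ∃ φ : {X : Set A // X.Nonempty} → A, Hom (URel E) E φ :=
  ⟨exists_hom_uRel_of_treeDuality, fun ⟨_, hφ⟩ => treeDuality_of_hom_uRel hφ⟩
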